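/- For the X-shaped two-qubit density matrix ρ = (1/T)·[diag(λ, a, b, s) with off-diagonal n between |01⟩ and |10⟩], the Wootters concurrence equals C(ρ) = max{0, (2/T)(n − √(λ s))}. -/

import Mathlib

/-! Since `ρ` is real, `ρ* = ρ`, and `σ_y ⊗ σ_y` is anti-diagonal in the computational basis, so
`R = ρ (σ_y ⊗ σ_y) ρ (σ_y ⊗ σ_y)` is again X-shaped: `T⁻² l s` in both corners and the middle block
`T⁻² [[ab + n², 2an], [2bn, ab + n²]]`. Hence the square roots of the eigenvalues of `R` are
`T⁻¹ (√(ab) + n)`, `T⁻¹ (√(ab) - n)`, `T⁻¹ √(ls)` twice. For a decreasing list, `μ₀ - μ₁ - μ₂ - μ₃` is twice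
the maximum minus the sum: if `T⁻¹ (√(ab) + n)` is the maximum this is `(2/T)(n - √(ls))`, and otherwise
both sides of the claimed identity are `0`. -/

open Polynomial

noncomputable def xMat (l a b s n : ℝ) : Matrix (Fin 2 × Fin 2) (Fin 2 × Fin 2) ℂ :=
  fun p q =>
    (((l + a + b + s : ℝ) : ℂ))⁻¹ *
      (if p = (0, 0) ∧ q = (0, 0) then (l : ℂ)
        else if p = (0, 1) ∧ q = (0, 1) then (a : ℂ)
        else if p = (1, 0) ∧ q = (1, 0) then (b : ℂ)
        else if p = (1, 1) ∧ q = (1, 1) then (s : ℂ)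
        else if (p = (0, 1) ∧ q = (1, 0)) ∨ (p = (1, 0) ∧ q = (0, 1)) then (n : ℂ)
        else 0)

noncomputable def pauliY : Matrix (Fin 2) (Fin 2) ℂ :=
  !![0, -Complex.I; Complex.I, 0]

noncomputable def YY : Matrix (Fin 2 × Fin 2) (Fin 2 × Fin 2) ℂ :=
  fun p q => pauliY p.1 q.1 * pauliY p.2 q.2

noncomputable def woottersR (ρ : Matrix (Fin 2 × Fin 2) (Fin 2 × Fin 2) ℂ) :
    Matrix (Fin 2 × Fin 2) (Fin 2 × Fin 2) ℂ :=
  ρ * YY * ρ.map (starRingEnd ℂ) * YY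

def twoQubitEquivFin : Fin 2 × Fin 2 ≃ Fin 4 where
  toFun p := ![![0, 1], ![2, 3]] p.1 p.2
  invFun := ![(0, 0), (0, 1), (1, 0), (1, 1)]
  left_inv := by decide
  right_inv := by decide

theorem xMat_map_conj (l a b s n : ℝ) :
    (xMat l a b s n).map (starRingEnd ℂ) = xMat l a b s n := by
  ext p q
  simp only [xMat, Matrix.map_apply, map_mul, map_inv₀, Complex.conj_ofReal,
    apply_ite (starRingEnd ℂ), map_zero]

theorem reindex_xMat (l a b s n : ℝ) :
    Matrix.reindex twoQubitEquivFin twoQubitEquivFin (xMat l a b s n) =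
      ((l + a + b + s : ℝ) : ℂ)⁻¹ • !![(l : ℂ), 0, 0, 0; 0, a, n, 0; 0, n, b, 0; 0, 0, 0, s] := by
  ext i j
  fin_cases i <;> fin_cases j <;> simp [xMat, twoQubitEquivFin, Prod.ext_iff]

theorem reindex_YY :
    Matrix.reindex twoQubitEquivFin twoQubitEquivFin YY =
      !![0, 0, 0, -1; 0, 0, 1, 0; 0, 1, 0, 0; -1, 0, 0, 0] := by
  ext i j
  fin_cases i <;> fin_cases j <;> simp [YY, pauliY, twoQubitEquivFin]

theorem reindex_woottersR_xMat (l a b s n : ℝ) :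
    Matrix.reindex twoQubitEquivFin twoQubitEquivFin (woottersR (xMat l a b s n)) =
      ((l + a + b + s : ℝ) : ℂ)⁻¹ ^ 2 • !![(l * s : ℂ), 0, 0, 0; 0, a * b + n ^ 2, 2 * a * n, 0;
        0, 2 * b * n, a * b + n ^ 2, 0; 0, 0, 0, l * s] := by
  rw [woottersR, xMat_map_conj, ← Matrix.coe_reindexAlgEquiv ℂ ℂ]
  simp only [map_mul]
  rw [Matrix.coe_reindexAlgEquiv, reindex_xMat, reindex_YY]
  generalize ((l + a + b + s : ℝ) : ℂ)⁻¹ = t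
  ext i j
  fin_cases i <;> fin_cases j <;> simp [Matrix.mul_apply, Fin.sum_univ_four] <;> ring

theorem Matrix.charpoly_of_fin_four_x_shape {R : Type*} [CommRing R] (d₁ p q r s d₄ : R) :
    (!![d₁, 0, 0, 0; 0, p, q, 0; 0, r, s, 0; 0, 0, 0, d₄] : Matrix (Fin 4) (Fin 4) R).charpoly
      = (X - C d₁) * ((X - C p) * (X - C s) - C q * C r) * (X - C d₄) := by
  rw [Matrix.charpoly, Matrix.det_succ_row_zero]
  simp [Fin.sum_univ_succ, Matrix.det_succ_row_zero, Matrix.charmatrix_apply, Matrix.submatrix]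
  ring

theorem X_sub_C_mul_X_sub_C_sub_C_mul_C_eq {R : Type*} [CommRing R] {p q r s α β : R}
    (hsum : α + β = p + s) (hprod : α * β = p * s - q * r) :
    (X - C p) * (X - C s) - C q * C r = (X - C α) * (X - C β) := by
  calc (X - C p) * (X - C s) - C q * C r = X ^ 2 - C (p + s) * X + C (p * s - q * r) := by
        simp only [map_add, map_sub, map_mul]; ring
    _ = (X - C α) * (X - C β) := by
        rw [← hsum, ← hprod]; simp only [map_add, map_mul]; ring

theorem charpoly_woottersR_xMat {l a b s n : ℝ} (hab : 0 ≤ a * b) (hls : 0 ≤ l * s) :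
    (woottersR (xMat l a b s n)).charpoly = ∏ i, (X - C (((![(l + a + b + s)⁻¹ * (√(a * b) + n),
      (l + a + b + s)⁻¹ * (√(a * b) - n), (l + a + b + s)⁻¹ * √(l * s),
      (l + a + b + s)⁻¹ * √(l * s)] i : ℝ) : ℂ) ^ 2)) := by
  rw [← Matrix.charpoly_reindex twoQubitEquivFin, reindex_woottersR_xMat]
  simp only [Matrix.smul_of, Matrix.smul_cons, smul_eq_mul, mul_zero, Matrix.smul_empty]
  rw [Matrix.charpoly_of_fin_four_x_shape, Fin.prod_univ_four]
  simp only [Matrix.cons_val_zero, Matrix.cons_val_one, Matrix.cons_val_two,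
    Matrix.cons_val_three, Matrix.head_cons, Matrix.tail_cons]
  push_cast
  have hP : (√(a * b) : ℂ) ^ 2 = a * b := by exact_mod_cast Real.sq_sqrt hab
  have hQ : (√(l * s) : ℂ) ^ 2 = l * s := by exact_mod_cast Real.sq_sqrt hls
  rw [X_sub_C_mul_X_sub_C_sub_C_mul_C_eq (α := ((l + a + b + s : ℂ)⁻¹ * (√(a * b) + n)) ^ 2)
    (β := ((l + a + b + s : ℂ)⁻¹ * (√(a * b) - n)) ^ 2)]
  · rw [mul_pow _ (√(l * s) : ℂ), hQ]; ring
  · linear_combination (2 * (l + a + b + s : ℂ)⁻¹ ^ 2) * hP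
  · linear_combination ((l + a + b + s : ℂ)⁻¹ ^ 4 * ((√(a * b) : ℂ) ^ 2 + a * b - 2 * n ^ 2)) * hP

theorem map_univ_eq_of_prod_X_sub_C_sq_eq {ι : Type*} [Fintype ι] {μ ν : ι → ℝ}
    (hμ : ∀ i, 0 ≤ μ i) (hν : ∀ i, 0 ≤ ν i)
    (h : ∏ i, (X - C ((μ i : ℂ) ^ 2)) = ∏ i, (X - C ((ν i : ℂ) ^ 2))) :
    Finset.univ.val.map μ = Finset.univ.val.map ν := by
  have roots_eq (f : ι → ℂ) : (∏ i, (X - C (f i))).roots = Finset.univ.val.map f := by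
    rw [roots_prod _ _ (Finset.prod_ne_zero_iff.mpr fun i _ => X_sub_C_ne_zero _)]
    simp only [roots_X_sub_C, Multiset.bind_singleton]
  have hsq := congrArg roots h
  rw [roots_eq, roots_eq] at hsq
  have sqrt_re_sq {v : ι → ℝ} (hv : ∀ i, 0 ≤ v i) : (fun i => √(((v i : ℂ) ^ 2).re)) = v := by
    funext i
    rw [← Complex.ofReal_pow, Complex.ofReal_re, Real.sqrt_sq (hv i)]
  simpa only [Multiset.map_map, Function.comp_def, sqrt_re_sq hμ, sqrt_re_sq hν] using
    congrArg (Multiset.map fun z : ℂ => √z.re) hsq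

theorem max_zero_sub_sub_sub_eq_of_map_univ_eq {μ : Fin 4 → ℝ} (hμ : Antitone μ) {x y z : ℝ}
    (hy : 0 ≤ y) (hyx : y ≤ x) (h : Finset.univ.val.map μ = Finset.univ.val.map ![x, y, z, z]) :
    max 0 (μ 0 - μ 1 - μ 2 - μ 3) = max 0 (x - y - 2 * z) := by
  have hvals : ({μ 0, μ 1, μ 2, μ 3} : Multiset ℝ) = {x, y, z, z} := h
  have hsum : μ 0 + μ 1 + μ 2 + μ 3 = x + y + 2 * z := by
    have := congrArg Multiset.sum hvals
    simp only [Multiset.insert_eq_cons, Multiset.sum_cons, Multiset.sum_singleton] at this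
    linarith
  have hx : x ≤ μ 0 := by
    have hmem : x ∈ ({μ 0, μ 1, μ 2, μ 3} : Multiset ℝ) := by
      rw [hvals]; simp
    simp only [Multiset.insert_eq_cons, Multiset.mem_cons, Multiset.mem_singleton] at hmem
    rcases hmem with h | h | h | h <;> rw [h] <;> exact hμ (Fin.zero_le _)
  have hmem : μ 0 ∈ ({x, y, z, z} : Multiset ℝ) := by
    rw [← hvals]; simp
  simp only [Multiset.insert_eq_cons, Multiset.mem_cons, Multiset.mem_singleton, or_self] at hmem
  rcases hmem with h0 | h0 | h0
  · congr 1; linarith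
  · congr 1; linarith
  · rw [max_eq_left (by linarith), max_eq_left (by linarith)]

theorem stmt12_general (l a b s n : ℝ) (hl : 0 ≤ l) (hs : 0 ≤ s)
    (hn : 0 ≤ n) (hρ : n ^ 2 ≤ a * b) (hT : 0 < l + a + b + s)
    (μ : Fin 4 → ℝ) (hmono : Antitone μ) (hpos : ∀ i, 0 ≤ μ i)
    (heig : (woottersR (xMat l a b s n)).charpoly =
      ∏ i : Fin 4, (X - C ((μ i : ℂ) ^ 2))) :
    max 0 (μ 0 - μ 1 - μ 2 - μ 3) =
      max 0 ((2 / (l + a + b + s)) * (n - Real.sqrt (l * s))) := by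
  have hnP : n ≤ √(a * b) := Real.le_sqrt_of_sq_le hρ
  have hT' : 0 ≤ (l + a + b + s)⁻¹ := inv_nonneg.mpr hT.le
  have hvals := map_univ_eq_of_prod_X_sub_C_sq_eq hpos
    (fun i => by fin_cases i <;> simp <;> positivity)
    (heig.symm.trans (charpoly_woottersR_xMat ((sq_nonneg n).trans hρ) (mul_nonneg hl hs)))
  rw [max_zero_sub_sub_sub_eq_of_map_univ_eq hmono (mul_nonneg hT' (sub_nonneg.2 hnP))
    (by gcongr; linarith) hvals]
  congr 1
  field_simp
  ring

/-- For the X-shaped two-qubit density matrix, the Wootters concurrence equals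
`max {0, (2/T)(n − √(λ s))}`: if `μ₀ ≥ μ₁ ≥ μ₂ ≥ μ₃ ≥ 0` are the square roots
of the eigenvalues of `R = ρ(σ_y⊗σ_y)ρ*(σ_y⊗σ_y)` (i.e. the characteristic
polynomial of `R` is `∏ᵢ (X − μᵢ²)`), then
`max {0, μ₀ − μ₁ − μ₂ − μ₃} = max {0, (2/T)(n − √(l·s))}`. -/
theorem stmt12 (l a b s n : ℝ) (hl : 0 ≤ l) (ha : 0 ≤ a) (hb : 0 ≤ b) (hs : 0 ≤ s)
    (hn : 0 ≤ n) (hρ : n ^ 2 ≤ a * b) (hT : 0 < l + a + b + s)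
    (μ : Fin 4 → ℝ) (hmono : Antitone μ) (hpos : ∀ i, 0 ≤ μ i)
    (heig : (woottersR (xMat l a b s n)).charpoly =
      ∏ i : Fin 4, (X - C ((μ i : ℂ) ^ 2))) :
    max 0 (μ 0 - μ 1 - μ 2 - μ 3) =
      max 0 ((2 / (l + a + b + s)) * (n - Real.sqrt (l * s))) :=
  stmt12_general l a b s n hl hs hn hρ hT μ hmono hpos heig
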